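/- Let H be a finite-dimensional complex inner product space, let G be a unit vector in an ancilla space A, let U be a unitary on A ⊗ H satisfying U² = 1, and define R = 2|G⟩⟨G| ⊗ 1 − 1 and W = R U. Suppose the operator M := (⟨G| ⊗ 1) U (|G⟩ ⊗ 1) on H is self-adjoint. Then for all natural numbers n, (⟨G| ⊗ 1) Wⁿ (|G⟩ ⊗ 1) = T_n(M), where T_n is the n-th Chebyshev polynomial of the first kind (applied to the operator M). -/

import Mathlib

open scoped Matrix

/-- The isometric embedding `|ψ⟩ ↦ |G⟩ ⊗ |ψ⟩`, as a matrix. -/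
def qubitizationIota (m n : ℕ) (G : Fin m → ℂ) :
    Matrix (Fin m × Fin n) (Fin n) ℂ :=
  fun p j => G p.1 * (if p.2 = j then 1 else 0)

/-- The reflection `R = 2 |G⟩⟨G| ⊗ 1 − 1`, as a matrix. -/
def qubitizationR (m n : ℕ) (G : Fin m → ℂ) :
    Matrix (Fin m × Fin n) (Fin m × Fin n) ℂ :=
  (2 : ℂ) • (Matrix.kroneckerMap (· * ·)
      (fun a b => G a * star (G b)) (1 : Matrix (Fin n) (Fin n) ℂ)) - 1

/-! With `ι = |G⟩ ⊗ 1` and `P = ιᴴ` we have `P ι = 1` and `R = 2 ι P - 1`, so `P R = P`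
and `P W = P U`. Hence `P W² = P U R U = 2 M (P U) - P U² = 2 M (P U) - P`, and multiplying by
`W^k ι` on the right shows that `a_k = P W^k ι` satisfies `a_{k+2} = 2 M a_{k+1} - a_k`,
with `a_0 = 1` and `a_1 = M`: the Chebyshev recurrence. -/

section Reflection

variable {K α β : Type*} [CommRing K] [Fintype α] [Fintype β] [DecidableEq α] [DecidableEq β]
  {P : Matrix β α K} {ι : Matrix α β K} {U : Matrix α α K}

theorem mul_reflection_of_mul_eq_one (hPι : P * ι = 1) : P * ((2 : K) • (ι * P) - 1) = P := by
  rw [Matrix.mul_sub, Matrix.mul_one, Matrix.mul_smul, ← Matrix.mul_assoc, hPι,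
    Matrix.one_mul, two_smul, add_sub_cancel_right]

theorem mul_pow_reflection_mul_add_two (hPι : P * ι = 1) (hU : U * U = 1) (k : ℕ) :
    P * (((2 : K) • (ι * P) - 1) * U) ^ (k + 2) * ι =
      2 * (P * U * ι) * (P * (((2 : K) • (ι * P) - 1) * U) ^ (k + 1) * ι)
        - P * (((2 : K) • (ι * P) - 1) * U) ^ k * ι := by
  set W := ((2 : K) • (ι * P) - 1) * U
  have hPW : P * W = P * U := by rw [← Matrix.mul_assoc, mul_reflection_of_mul_eq_one hPι]
  have hPWW : P * W * W = (2 : K) • (P * U * ι * (P * U)) - P := by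
    rw [hPW]
    simp only [W, Matrix.mul_sub, Matrix.sub_mul, Matrix.mul_smul, Matrix.smul_mul,
      Matrix.one_mul, Matrix.mul_assoc, hU, Matrix.mul_one]
  have hPU : P * U * (W ^ k * ι) = P * W ^ (k + 1) * ι := by
    rw [pow_succ', ← hPW]
    simp only [Matrix.mul_assoc]
  calc P * W ^ (k + 2) * ι = P * W * W * (W ^ k * ι) := by
        simp only [pow_succ', Matrix.mul_assoc]
    _ = _ := by
        rw [hPWW, Matrix.sub_mul, Matrix.smul_mul, Matrix.mul_assoc _ (P * U), hPU, two_smul,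
          two_mul, Matrix.add_mul, Matrix.mul_assoc P (W ^ k)]

theorem mul_pow_reflection_mul_eq_aeval_chebyshev_T (hPι : P * ι = 1) (hU : U * U = 1) (k : ℕ) :
    P * (((2 : K) • (ι * P) - 1) * U) ^ k * ι =
      Polynomial.aeval (P * U * ι) (Polynomial.Chebyshev.T K k) := by
  induction k using Nat.twoStepInduction with
  | zero => simp [hPι]
  | one => simp [← Matrix.mul_assoc, mul_reflection_of_mul_eq_one hPι]
  | more k ih₀ ih₁ =>
    rw [mul_pow_reflection_mul_add_two hPι hU, ih₀, ih₁]
    push_cast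
    rw [Polynomial.Chebyshev.T_add_two]
    simp [map_ofNat]

end Reflection

theorem qubitizationIota_conjTranspose_mul_self {m n : ℕ} {G : Fin m → ℂ}
    (hG : ∑ a, ‖G a‖ ^ 2 = 1) : (qubitizationIota m n G)ᴴ * qubitizationIota m n G = 1 := by
  have hG' : ∑ a, starRingEnd ℂ (G a) * G a = 1 := by
    simp only [← Complex.normSq_eq_conj_mul_self, Complex.normSq_eq_norm_sq]
    exact_mod_cast hG
  ext i j
  simp only [Matrix.mul_apply, Matrix.conjTranspose_apply, qubitizationIota, Matrix.one_apply,
    Fintype.sum_prod_type]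
  by_cases hij : i = j
  · simp [hij, hG']
  · simp [hij, Ne.symm hij]

theorem qubitizationR_eq_two_smul_sub_one (m n : ℕ) (G : Fin m → ℂ) :
    qubitizationR m n G =
      (2 : ℂ) • (qubitizationIota m n G * (qubitizationIota m n G)ᴴ) - 1 := by
  ext ⟨a, i⟩ ⟨b, j⟩
  simp only [qubitizationR, qubitizationIota, Matrix.sub_apply, Matrix.smul_apply,
    Matrix.mul_apply, Matrix.kroneckerMap, Matrix.of_apply, Matrix.conjTranspose_apply,
    Matrix.one_apply]
  by_cases hij : i = j
  · simp [hij]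
  · simp [hij, Ne.symm hij]

theorem qubitization_chebyshev_general (m n : ℕ) (G : Fin m → ℂ)
    (hG : ∑ a, ‖G a‖ ^ 2 = 1)
    (U : Matrix (Fin m × Fin n) (Fin m × Fin n) ℂ)
    (hU2 : U * U = 1)
    (M : Matrix (Fin n) (Fin n) ℂ)
    (hM : M = (qubitizationIota m n G)ᴴ * U * qubitizationIota m n G) :
    ∀ k : ℕ,
      (qubitizationIota m n G)ᴴ * (qubitizationR m n G * U) ^ k * qubitizationIota m n G
        = Polynomial.aeval M (Polynomial.Chebyshev.T ℂ (k : ℤ)) := by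
  rw [hM, qubitizationR_eq_two_smul_sub_one]
  exact mul_pow_reflection_mul_eq_aeval_chebyshev_T
    (qubitizationIota_conjTranspose_mul_self hG) hU2

/-- Qubitization: if `G` is a unit vector, `U` is unitary with `U² = 1`, and the
block-encoded operator `M = (⟨G|⊗1) U (|G⟩⊗1)` is Hermitian, then
`(⟨G|⊗1) (RU)ᵏ (|G⟩⊗1) = T_k(M)`, the `k`-th Chebyshev polynomial of `M`. -/
theorem qubitization_chebyshev (m n : ℕ) (G : Fin m → ℂ)
    (hG : ∑ a, ‖G a‖ ^ 2 = 1)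
    (U : Matrix (Fin m × Fin n) (Fin m × Fin n) ℂ)
    (hU : U ∈ Matrix.unitaryGroup (Fin m × Fin n) ℂ)
    (hU2 : U * U = 1)
    (M : Matrix (Fin n) (Fin n) ℂ)
    (hM : M = (qubitizationIota m n G)ᴴ * U * qubitizationIota m n G)
    (hMherm : M.IsHermitian) :
    ∀ k : ℕ,
      (qubitizationIota m n G)ᴴ * (qubitizationR m n G * U) ^ k * qubitizationIota m n G
        = Polynomial.aeval M (Polynomial.Chebyshev.T ℂ (k : ℤ)) :=
  qubitization_chebyshev_general m n G hG U hU2 M hM
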